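/- arXiv:2406.00292 — 3 statements merged into one kernel-verified Lean document; each statement's English description precedes it below -/
import Mathlib

section
/- Suppose G is obtained by splicing two matching covered graphs G1 and G2 at vertices u1 ∈ V(G1) and u2 ∈ V(G2) (identifying the edge-ends at u1 with those at u2 via a bijection after deleting u1 and u2). Then every edge of G1 that is removable in G1 and not incident with u1 is removable in G. -/
open SimpleGraph Set

universe u
variable {V : Type u}

/-- Number of odd components of a graph. -/
noncomputable def oddComps (G : SimpleGraph V) : ℕ :=
  Nat.card {c : G.ConnectedComponent // Odd (Nat.card c.supp)}

/-- `S` is a barrier of `G`: the number of odd components of `G − S` equals `|S|`. -/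
def IsBarrier (G : SimpleGraph V) (S : Set V) : Prop :=
  oddComps (G.induce Sᶜ) = S.ncard

/-- `G` has a perfect matching. -/
def HasPM (G : SimpleGraph V) : Prop :=
  ∃ M : Subgraph G, M.IsPerfectMatching

/-- `G` is matching covered. -/
def MatchingCovered (G : SimpleGraph V) : Prop :=
  G.Connected ∧ G.edgeSet.Nonempty ∧
    ∀ e ∈ G.edgeSet, ∃ M : Subgraph G, M.IsPerfectMatching ∧ e ∈ M.edgeSet

/-- An edge `e` of a matching covered graph `G` is removable. -/
def Removable (G : SimpleGraph V) (e : Sym2 V) : Prop :=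
  e ∈ G.edgeSet ∧ MatchingCovered (G.deleteEdges {e})

/-- `G` is 3-connected. -/
def ThreeConnected (G : SimpleGraph V) : Prop :=
  4 ≤ Nat.card V ∧ ∀ S : Set V, S.ncard ≤ 2 → (G.induce Sᶜ).Connected

/-- A brick. -/
def IsBrick (G : SimpleGraph V) : Prop :=
  ThreeConnected G ∧ ∀ x y : V, x ≠ y → HasPM (G.induce ({x, y} : Set V)ᶜ)

/-- neighbours outside `S` of vertices of `S`. -/
def Nbrs (G : SimpleGraph V) (S : Set V) : Set V :=
  {v | v ∉ S ∧ ∃ u ∈ S, G.Adj u v}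

/-- factor-critical graph. -/
def FactorCritical (G : SimpleGraph V) : Prop :=
  ∀ v : V, HasPM (G.induce ({v} : Set V)ᶜ)

/-- `(U, W)` is a bipartition of `G`. -/
def IsBipartition (G : SimpleGraph V) (U W : Set V) : Prop :=
  Disjoint U W ∧ U ∪ W = Set.univ ∧
    ∀ a b : V, G.Adj a b → (a ∈ U ∧ b ∈ W) ∨ (a ∈ W ∧ b ∈ U)

/-!
Deleting an edge of `G₁ - u₁` commutes with splicing and `G₁ - e` is matching covered, so it
suffices that a splicing of two matching covered graphs (with `G₁` finite) is matching covered.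

Perfect matchings `M₁` of `G₁` and `M₂` of `G₂` whose edges at `u₁` and `u₂` end in paired
neighbours glue to a perfect matching of the splicing, and suitable choices cover any given edge.

For connectivity, let `T` be a set of vertices of `G₁ - u₁` closed under adjacency in `G₁ - u₁`.
If `u₁` had a neighbour `m ∉ T` and a neighbour `w ∈ T`, the perfect matchings through `u₁m` and
through `u₁w` would make both `|T|` and `|T| - 1` even. Hence the vertices of `G₁ - u₁` not
connected to a fixed neighbour of `u₁` form such a set containing no neighbour of `u₁`, so, `G₁`
being connected, there are none; the vertices of `G₂ - u₂` are then reached through the pairing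
of neighbours.
-/

namespace SimpleGraph

variable {H : SimpleGraph V}

def EachEdgeInPerfectMatching (H : SimpleGraph V) : Prop :=
  ∀ e ∈ H.edgeSet, ∃ M : H.Subgraph, M.IsPerfectMatching ∧ e ∈ M.edgeSet

theorem Subgraph.IsPerfectMatching.even_ncard_of_forall_adj_mem [Finite V] {M : H.Subgraph}
    (hM : M.IsPerfectMatching) {S : Set V} (hS : ∀ v ∈ S, ∀ w, M.Adj v w → w ∈ S) :
    Even S.ncard := by
  classical
  have hmatch : (M.induce S).IsMatching := by
    intro v hv
    obtain ⟨w, hvw, huniq⟩ := hM.1 (hM.2 v)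
    exact ⟨w, ⟨hv, hS v hv w hvw, hvw⟩, fun z hz => huniq z hz.2.2⟩
  have : Fintype (M.induce S).verts := Fintype.ofFinite _
  have hcard := hmatch.even_card
  rwa [← Set.ncard_eq_toFinset_card'] at hcard

theorem Subgraph.IsPerfectMatching.even_ncard_diff_of_adj [Finite V] {M : H.Subgraph}
    (hM : M.IsPerfectMatching) {u m : V} (hum : M.Adj u m) {T : Set V} (huT : u ∉ T)
    (hT : ∀ v ∈ T, ∀ z, z ≠ u → H.Adj v z → z ∈ T) : Even (T \ {m}).ncard := by
  refine hM.even_ncard_of_forall_adj_mem ?_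
  rintro v ⟨hvT, hvm⟩ z hvz
  have hzu : z ≠ u := by
    rintro rfl
    exact hvm (hM.1.eq_of_adj_left hum hvz.symm).symm
  have hzm : z ≠ m := by
    rintro rfl
    exact huT (hM.1.eq_of_adj_right hum hvz ▸ hvT)
  exact ⟨hT v hvT z hzu (M.adj_sub hvz), hzm⟩

theorem Subgraph.IsPerfectMatching.existsUnique_adj_subtype {M : H.Subgraph}
    (hM : M.IsPerfectMatching) {u w : V} (huw : M.Adj u w) {a : {v // v ≠ u}} (haw : a.1 ≠ w) :
    ∃! z : {v // v ≠ u}, M.Adj a z := by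
  obtain ⟨z, haz, huniq⟩ := hM.1 (hM.2 a.1)
  have hzu : z ≠ u := by
    rintro rfl
    exact haw (hM.1.eq_of_adj_left huw haz.symm).symm
  exact ⟨⟨z, hzu⟩, haz, fun z' hz' => Subtype.ext (huniq z' hz')⟩

theorem notMem_of_adj_of_forall_adj_mem [Finite V] (hH : H.EachEdgeInPerfectMatching)
    {u m w : V} {T : Set V} (huT : u ∉ T) (hT : ∀ v ∈ T, ∀ z, z ≠ u → H.Adj v z → z ∈ T)
    (hm : H.Adj u m) (hmT : m ∉ T) (hw : H.Adj u w) : w ∉ T := by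
  intro hwT
  obtain ⟨M, hM, hum⟩ := hH _ (H.mem_edgeSet.2 hm)
  obtain ⟨M', hM', huw⟩ := hH _ (H.mem_edgeSet.2 hw)
  have heven : Even T.ncard := by
    simpa [Set.sdiff_singleton_eq_self hmT] using hM.even_ncard_diff_of_adj hum huT hT
  have heven' : Even (T \ {w}).ncard := hM'.even_ncard_diff_of_adj huw huT hT
  rw [← Set.ncard_sdiff_singleton_add_one hwT] at heven
  exact Nat.not_even_iff_odd.2 heven'.add_one heven

theorem Preconnected.eq_empty_of_forall_adj_mem {u : V} {T : Set V} (hH : H.Preconnected)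
    (huT : u ∉ T) (hT : ∀ v ∈ T, ∀ z, z ≠ u → H.Adj v z → z ∈ T)
    (hu : ∀ w, H.Adj u w → w ∉ T) : T = ∅ := by
  refine Set.eq_empty_of_forall_notMem fun a haT => ?_
  obtain ⟨d, -, hd, hd'⟩ := (hH a u).some.exists_boundary_dart T haT huT
  by_cases h : d.snd = u
  · exact hu d.fst (h ▸ d.adj.symm) hd
  · exact hd' (hT _ hd _ h d.adj)

end SimpleGraph

theorem MatchingCovered.exists_adj {H : SimpleGraph V} (hH : MatchingCovered H) (u : V) :
    ∃ w, H.Adj u w := by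
  obtain ⟨-, ⟨e, he⟩, hpm⟩ := hH
  obtain ⟨M, hM, -⟩ := hpm e he
  obtain ⟨w, huw, -⟩ := hM.1 (hM.2 u)
  exact ⟨w, M.adj_sub huw⟩

structure IsSplicing {V1 V2 : Type*} (G1 : SimpleGraph V1) (G2 : SimpleGraph V2) (u1 : V1)
    (u2 : V2) (G : SimpleGraph ({v // v ≠ u1} ⊕ {v // v ≠ u2})) : Prop where
  adj_inl_inl : ∀ a b : {v // v ≠ u1}, G.Adj (.inl a) (.inl b) ↔ G1.Adj a b
  adj_inr_inr : ∀ a b : {v // v ≠ u2}, G.Adj (.inr a) (.inr b) ↔ G2.Adj a b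
  adj_of_adj_inl_inr : ∀ a b, G.Adj (.inl a) (.inr b) → G1.Adj u1 a ∧ G2.Adj u2 b
  existsUnique_adj_inr : ∀ a : {v // v ≠ u1}, G1.Adj u1 a → ∃! b, G.Adj (.inl a) (.inr b)
  existsUnique_adj_inl : ∀ b : {v // v ≠ u2}, G2.Adj u2 b → ∃! a, G.Adj (.inl a) (.inr b)

namespace IsSplicing

variable {V1 V2 : Type*} {G1 : SimpleGraph V1} {G2 : SimpleGraph V2} {u1 : V1} {u2 : V2}
  {G : SimpleGraph ({v // v ≠ u1} ⊕ {v // v ≠ u2})}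

theorem deleteEdges_inl (hS : IsSplicing G1 G2 u1 u2 G) {x y : V1} (hx : x ≠ u1) (hy : y ≠ u1) :
    IsSplicing (G1.deleteEdges {s(x, y)}) G2 u1 u2
      (G.deleteEdges {s(.inl ⟨x, hx⟩, .inl ⟨y, hy⟩)}) where
  adj_inl_inl a b := by simp [hS.adj_inl_inl, Subtype.ext_iff]
  adj_inr_inr a b := by simp [hS.adj_inr_inr]
  adj_of_adj_inl_inr a b h := by
    have := hS.adj_of_adj_inl_inr a b (deleteEdges_adj.1 h).1
    simp [this, hx.symm, hy.symm]
  existsUnique_adj_inr a ha := by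
    simpa using hS.existsUnique_adj_inr a (deleteEdges_adj.1 ha).1
  existsUnique_adj_inl b hb := by
    simpa using hS.existsUnique_adj_inl b hb

theorem exists_isPerfectMatching_glue (hS : IsSplicing G1 G2 u1 u2 G) {M1 : G1.Subgraph}
    {M2 : G2.Subgraph} (hM1 : M1.IsPerfectMatching) (hM2 : M2.IsPerfectMatching)
    {a : {v // v ≠ u1}} {b : {v // v ≠ u2}} (ha : M1.Adj u1 a) (hb : M2.Adj u2 b)
    (hab : G.Adj (.inl a) (.inr b)) :
    ∃ M : G.Subgraph, M.IsPerfectMatching ∧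
      (∀ a' b' : {v // v ≠ u1}, M1.Adj a' b' → M.Adj (.inl a') (.inl b')) ∧
      (∀ a' b' : {v // v ≠ u2}, M2.Adj a' b' → M.Adj (.inr a') (.inr b')) ∧
      M.Adj (.inl a) (.inr b) := by
  let M : G.Subgraph :=
    { verts := univ
      Adj
        | .inl a', .inl b' => M1.Adj a' b'
        | .inl a', .inr b' => a' = a ∧ b' = b
        | .inr b', .inl a' => a' = a ∧ b' = b
        | .inr a', .inr b' => M2.Adj a' b'
      adj_sub := by
        rintro (a' | a') (b' | b') h
        · exact (hS.adj_inl_inl a' b').2 (M1.adj_sub h)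
        · exact h.1 ▸ h.2 ▸ hab
        · exact h.1 ▸ h.2 ▸ hab.symm
        · exact (hS.adj_inr_inr a' b').2 (M2.adj_sub h)
      edge_vert _ := mem_univ _
      symm := ⟨by
        rintro (a' | a') (b' | b') h
        exacts [h.symm, h, h, h.symm]⟩ }
  refine ⟨M, Subgraph.isPerfectMatching_iff.2 ?_, fun _ _ h => h, fun _ _ h => h, rfl, rfl⟩
  rintro (a' | b')
  · by_cases ha' : a' = a
    · subst ha'
      refine ⟨.inr b, ⟨rfl, rfl⟩, ?_⟩
      rintro (z | z) hz
      · exact absurd (hM1.1.eq_of_adj_left ha.symm hz) z.2.symm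
      · exact congrArg _ hz.2
    · obtain ⟨z, hz, huniq⟩ :=
        hM1.existsUnique_adj_subtype ha (a := a') (Subtype.coe_ne_coe.2 ha')
      refine ⟨.inl z, hz, ?_⟩
      rintro (z' | z') hz'
      · exact congrArg _ (huniq z' hz')
      · exact absurd hz'.1 ha'
  · by_cases hb' : b' = b
    · subst hb'
      refine ⟨.inl a, ⟨rfl, rfl⟩, ?_⟩
      rintro (z | z) hz
      · exact congrArg _ hz.1
      · exact absurd (hM2.1.eq_of_adj_left hb.symm hz) z.2.symm
    · obtain ⟨z, hz, huniq⟩ :=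
        hM2.existsUnique_adj_subtype hb (a := b') (Subtype.coe_ne_coe.2 hb')
      refine ⟨.inr z, hz, ?_⟩
      rintro (z' | z') hz'
      · exact absurd hz'.2 hb'
      · exact congrArg _ (huniq z' hz')

theorem exists_isPerfectMatching_forall_adj_inl (hS : IsSplicing G1 G2 u1 u2 G)
    (h2 : G2.EachEdgeInPerfectMatching) {M1 : G1.Subgraph} (hM1 : M1.IsPerfectMatching) :
    ∃ M : G.Subgraph, M.IsPerfectMatching ∧
      ∀ a b : {v // v ≠ u1}, M1.Adj a b → M.Adj (.inl a) (.inl b) := by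
  obtain ⟨a, hua, -⟩ := hM1.1 (hM1.2 u1)
  have hau : a ≠ u1 := (M1.adj_sub hua).ne'
  obtain ⟨b, hab, -⟩ := hS.existsUnique_adj_inr ⟨a, hau⟩ (M1.adj_sub hua)
  obtain ⟨M2, hM2, hub⟩ := h2 _ (G2.mem_edgeSet.2 (hS.adj_of_adj_inl_inr _ _ hab).2)
  obtain ⟨M, hM, hM1M, -⟩ := hS.exists_isPerfectMatching_glue hM1 hM2 hua hub hab
  exact ⟨M, hM, hM1M⟩

theorem exists_isPerfectMatching_forall_adj_inr (hS : IsSplicing G1 G2 u1 u2 G)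
    (h1 : G1.EachEdgeInPerfectMatching) {M2 : G2.Subgraph} (hM2 : M2.IsPerfectMatching) :
    ∃ M : G.Subgraph, M.IsPerfectMatching ∧
      ∀ a b : {v // v ≠ u2}, M2.Adj a b → M.Adj (.inr a) (.inr b) := by
  obtain ⟨b, hub, -⟩ := hM2.1 (hM2.2 u2)
  have hbu : b ≠ u2 := (M2.adj_sub hub).ne'
  obtain ⟨a, hab, -⟩ := hS.existsUnique_adj_inl ⟨b, hbu⟩ (M2.adj_sub hub)
  obtain ⟨M1, hM1, hua⟩ := h1 _ (G1.mem_edgeSet.2 (hS.adj_of_adj_inl_inr _ _ hab).1)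
  obtain ⟨M, hM, -, hM2M, -⟩ := hS.exists_isPerfectMatching_glue hM1 hM2 hua hub hab
  exact ⟨M, hM, hM2M⟩

theorem exists_isPerfectMatching_adj_inl_inr (hS : IsSplicing G1 G2 u1 u2 G)
    (h1 : G1.EachEdgeInPerfectMatching) (h2 : G2.EachEdgeInPerfectMatching)
    {a : {v // v ≠ u1}} {b : {v // v ≠ u2}} (hab : G.Adj (.inl a) (.inr b)) :
    ∃ M : G.Subgraph, M.IsPerfectMatching ∧ M.Adj (.inl a) (.inr b) := by
  obtain ⟨hG1a, hG2b⟩ := hS.adj_of_adj_inl_inr a b hab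
  obtain ⟨M1, hM1, hua⟩ := h1 _ (G1.mem_edgeSet.2 hG1a)
  obtain ⟨M2, hM2, hub⟩ := h2 _ (G2.mem_edgeSet.2 hG2b)
  obtain ⟨M, hM, -, -, hMab⟩ := hS.exists_isPerfectMatching_glue hM1 hM2 hua hub hab
  exact ⟨M, hM, hMab⟩

theorem eachEdgeInPerfectMatching (hS : IsSplicing G1 G2 u1 u2 G)
    (h1 : G1.EachEdgeInPerfectMatching) (h2 : G2.EachEdgeInPerfectMatching) :
    G.EachEdgeInPerfectMatching := by
  rintro ⟨(a | a), (b | b)⟩ hab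
  · obtain ⟨M1, hM1, hab⟩ := h1 _ (G1.mem_edgeSet.2 ((hS.adj_inl_inl a b).1 hab))
    obtain ⟨M, hM, hM1M⟩ := hS.exists_isPerfectMatching_forall_adj_inl h2 hM1
    exact ⟨M, hM, hM1M a b hab⟩
  · exact hS.exists_isPerfectMatching_adj_inl_inr h1 h2 hab
  · obtain ⟨M, hM, hba⟩ :=
      hS.exists_isPerfectMatching_adj_inl_inr h1 h2 (G.mem_edgeSet.1 hab).symm
    exact ⟨M, hM, hba.symm⟩
  · obtain ⟨M2, hM2, hab⟩ := h2 _ (G2.mem_edgeSet.2 ((hS.adj_inr_inr a b).1 hab))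
    obtain ⟨M, hM, hM2M⟩ := hS.exists_isPerfectMatching_forall_adj_inr h1 hM2
    exact ⟨M, hM, hM2M a b hab⟩

theorem connected [Finite V1] (hS : IsSplicing G1 G2 u1 u2 G) (h1 : MatchingCovered G1)
    (h2 : G2.Connected) : G.Connected := by
  obtain ⟨n, hn⟩ := h1.exists_adj u1
  set v0 : {v // v ≠ u1} ⊕ {v // v ≠ u2} := .inl ⟨n, hn.ne'⟩
  have hinl (a : {v // v ≠ u1}) : G.Reachable (.inl a) v0 := by
    set T : Set V1 := {a | ∃ h : a ≠ u1, ¬G.Reachable (.inl ⟨a, h⟩) v0}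
    have hu1 : u1 ∉ T := fun ⟨h, _⟩ => h rfl
    have hT : ∀ v ∈ T, ∀ z, z ≠ u1 → G1.Adj v z → z ∈ T := fun v ⟨hv, hvT⟩ z hz hvz =>
      ⟨hz, fun hr => hvT (((hS.adj_inl_inl ⟨v, hv⟩ ⟨z, hz⟩).2 hvz).reachable.trans hr)⟩
    have hnT : n ∉ T := fun ⟨_, h⟩ => h .rfl
    have hTe := h1.1.preconnected.eq_empty_of_forall_adj_mem hu1 hT
      fun w hw => notMem_of_adj_of_forall_adj_mem h1.2.2 hu1 hT hn hnT hw
    by_contra ha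
    exact hTe.subset ⟨a.2, ha⟩
  have hinr (b : {v // v ≠ u2}) : G.Reachable (.inr b) v0 := by
    set T : Set V2 := {b | ∃ h : b ≠ u2, ¬G.Reachable (.inr ⟨b, h⟩) v0}
    have hu2 : u2 ∉ T := fun ⟨h, _⟩ => h rfl
    have hT : ∀ v ∈ T, ∀ z, z ≠ u2 → G2.Adj v z → z ∈ T := fun v ⟨hv, hvT⟩ z hz hvz =>
      ⟨hz, fun hr => hvT (((hS.adj_inr_inr ⟨v, hv⟩ ⟨z, hz⟩).2 hvz).reachable.trans hr)⟩
    have hTe := h2.preconnected.eq_empty_of_forall_adj_mem hu2 hT fun w hw ⟨hw', hwT⟩ => by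
      obtain ⟨a, haw, -⟩ := hS.existsUnique_adj_inl ⟨w, hw'⟩ hw
      exact hwT (haw.symm.reachable.trans (hinl a))
    by_contra hb
    exact hTe.subset ⟨b.2, hb⟩
  have hG : ∀ p, G.Reachable p v0 := Sum.rec hinl hinr
  exact (connected_iff G).2 ⟨fun p q => (hG p).trans (hG q).symm, ⟨v0⟩⟩

theorem matchingCovered [Finite V1] (hS : IsSplicing G1 G2 u1 u2 G) (h1 : MatchingCovered G1)
    (h2 : MatchingCovered G2) : MatchingCovered G := by
  obtain ⟨a, ha⟩ := h1.exists_adj u1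
  obtain ⟨b, hab, -⟩ := hS.existsUnique_adj_inr ⟨a, ha.ne'⟩ ha
  exact ⟨hS.connected h1 h2.1, ⟨_, G.mem_edgeSet.2 hab⟩,
    hS.eachEdgeInPerfectMatching h1.2.2 h2.2.2⟩

end IsSplicing

theorem stmt17_general {V1 V2 : Type*} [Fintype V1]
    (G1 : SimpleGraph V1) (G2 : SimpleGraph V2) (u1 : V1) (u2 : V2)
    (G : SimpleGraph ({v : V1 // v ≠ u1} ⊕ {v : V2 // v ≠ u2}))
    (hmc2 : MatchingCovered G2)
    (hG1 : ∀ a b : {v : V1 // v ≠ u1},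
      G.Adj (Sum.inl a) (Sum.inl b) ↔ G1.Adj a.1 b.1)
    (hG2 : ∀ a b : {v : V2 // v ≠ u2},
      G.Adj (Sum.inr a) (Sum.inr b) ↔ G2.Adj a.1 b.1)
    (hcross : ∀ (a : {v : V1 // v ≠ u1}) (b : {v : V2 // v ≠ u2}),
      G.Adj (Sum.inl a) (Sum.inr b) → G1.Adj u1 a.1 ∧ G2.Adj u2 b.1)
    (hpair1 : ∀ a : {v : V1 // v ≠ u1}, G1.Adj u1 a.1 →
      ∃! b : {v : V2 // v ≠ u2}, G.Adj (Sum.inl a) (Sum.inr b))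
    (hpair2 : ∀ b : {v : V2 // v ≠ u2}, G2.Adj u2 b.1 →
      ∃! a : {v : V1 // v ≠ u1}, G.Adj (Sum.inl a) (Sum.inr b))
    (x y : V1) (hx : x ≠ u1) (hy : y ≠ u1)
    (hrem : Removable G1 s(x, y)) :
    Removable G s(Sum.inl ⟨x, hx⟩, Sum.inl ⟨y, hy⟩) := by
  have hS : IsSplicing G1 G2 u1 u2 G := ⟨hG1, hG2, hcross, hpair1, hpair2⟩
  exact ⟨G.mem_edgeSet.2 ((hG1 _ _).2 (G1.mem_edgeSet.1 hrem.1)),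
    (hS.deleteEdges_inl hx hy).matchingCovered hrem.2 hmc2⟩

/-- a removable edge of `G₁` not incident with the splicing
vertex `u₁` is removable in any splicing `G` of `G₁` and `G₂` at `u₁, u₂`. -/
theorem stmt17 {V1 V2 : Type*} [Fintype V1] [Fintype V2]
    (G1 : SimpleGraph V1) (G2 : SimpleGraph V2) (u1 : V1) (u2 : V2)
    (G : SimpleGraph ({v : V1 // v ≠ u1} ⊕ {v : V2 // v ≠ u2}))
    (hmc1 : MatchingCovered G1) (hmc2 : MatchingCovered G2)
    (hG1 : ∀ a b : {v : V1 // v ≠ u1},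
      G.Adj (Sum.inl a) (Sum.inl b) ↔ G1.Adj a.1 b.1)
    (hG2 : ∀ a b : {v : V2 // v ≠ u2},
      G.Adj (Sum.inr a) (Sum.inr b) ↔ G2.Adj a.1 b.1)
    (hcross : ∀ (a : {v : V1 // v ≠ u1}) (b : {v : V2 // v ≠ u2}),
      G.Adj (Sum.inl a) (Sum.inr b) → G1.Adj u1 a.1 ∧ G2.Adj u2 b.1)
    (hpair1 : ∀ a : {v : V1 // v ≠ u1}, G1.Adj u1 a.1 →
      ∃! b : {v : V2 // v ≠ u2}, G.Adj (Sum.inl a) (Sum.inr b))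
    (hpair2 : ∀ b : {v : V2 // v ≠ u2}, G2.Adj u2 b.1 →
      ∃! a : {v : V1 // v ≠ u1}, G.Adj (Sum.inl a) (Sum.inr b))
    (x y : V1) (hx : x ≠ u1) (hy : y ≠ u1)
    (hrem : Removable G1 s(x, y)) :
    Removable G s(Sum.inl ⟨x, hx⟩, Sum.inl ⟨y, hy⟩) :=
  stmt17_general G1 G2 u1 u2 G hmc2 hG1 hG2 hcross hpair1 hpair2 x y hx hy hrem
end

section
/- Let G be a 3-connected cubic near-bipartite graph with removable doubleton {e1, e2}, let H = G − {e1, e2} have bipartition (U, W) with both ends of e1 in U, and let ∂(X) be a nontrivial 3-cut of G with |X ∩ U| ≥ |X ∩ W|. Then |X ∩ U| = |X ∩ W| + 1. -/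
open SimpleGraph Set

universe u
variable {V : Type u}

section MyHelpers
open Finset in
private lemma myDartSum [Fintype V] [DecidableEq V] (G : SimpleGraph V) [DecidableRel G.Adj]
    (p : V → Prop) [DecidablePred p] :
    (Finset.univ.filter (fun d : G.Dart => p d.fst)).card
      = ∑ v ∈ Finset.univ.filter p, G.degree v := by
  rw [Finset.card_eq_sum_card_fiberwise (f := fun d => d.fst)
    (t := Finset.univ.filter p) (by intro d hd; simp_all)]
  refine Finset.sum_congr rfl fun v hv => ?_
  rw [← SimpleGraph.dart_fst_fiber_card_eq_degree]
  congr 1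
  ext d
  simp only [Finset.mem_filter, Finset.mem_univ, true_and, Set.mem_setOf_eq] at hv ⊢
  constructor
  · exact fun h => h.2
  · rintro rfl; exact ⟨hv, rfl⟩

private lemma myDartSymm [Fintype V] [DecidableEq V] (G : SimpleGraph V) [DecidableRel G.Adj]
    (p : G.Dart → Prop) [DecidablePred p] :
    (Finset.univ.filter (fun d : G.Dart => p d.symm)).card
      = (Finset.univ.filter p).card := by
  apply Finset.card_bij' (fun d _ => d.symm) (fun d _ => d.symm) <;>
    intro d hd <;> simp_all

private lemma myEvenSymmClosed [Fintype V] [DecidableEq V] {G : SimpleGraph V}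
    [DecidableRel G.Adj]
    (s : Finset G.Dart) (hs : ∀ d ∈ s, d.symm ∈ s) : Even s.card := by
  induction s using Finset.strongInduction with
  | _ s ih =>
    rcases s.eq_empty_or_nonempty with rfl | ⟨d, hd⟩
    · simp
    · have hds : d.symm ∈ s := hs d hd
      have hpair : ({d, d.symm} : Finset G.Dart) ⊆ s := by
        intro x hx
        simp only [Finset.mem_insert, Finset.mem_singleton] at hx
        rcases hx with rfl | rfl <;> assumption
      have hlt : s \ {d, d.symm} ⊂ s :=
        Finset.sdiff_ssubset hpair (by simp)
      have hcl : ∀ e ∈ s \ {d, d.symm}, e.symm ∈ s \ {d, d.symm} := by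
        intro e he
        simp only [Finset.mem_sdiff, Finset.mem_insert, Finset.mem_singleton] at he ⊢
        refine ⟨hs e he.1, ?_⟩
        push_neg
        constructor
        · intro h
          exact he.2 (Or.inr (by rw [← h, SimpleGraph.Dart.symm_symm]))
        · intro h
          exact he.2 (Or.inl (SimpleGraph.Dart.symm_involutive.injective h))
      have heven := ih _ hlt hcl
      have h2 : ({d, d.symm} : Finset G.Dart).card = 2 := by
        rw [Finset.card_insert_of_notMem (by simp [(SimpleGraph.Dart.symm_ne d).symm]),
          Finset.card_singleton]
      have hcard : s.card = (s \ {d, d.symm}).card + 2 := by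
        rw [Finset.card_sdiff_of_subset hpair, h2]
        have := Finset.card_le_card hpair
        omega
      obtain ⟨k, hk⟩ := heven
      exact ⟨k + 1, by omega⟩
end MyHelpers

/-- for a nontrivial 3-cut `∂(X)` in a 3-connected cubic
near-bipartite graph, `|X ∩ U| = |X ∩ W| + 1` (assuming `|X ∩ U| ≥ |X ∩ W|`). -/
theorem stmt18 [Fintype V] [DecidableEq V] (G : SimpleGraph V)
    [DecidableRel G.Adj]
    (hcubic : ∀ v : V, G.degree v = 3) (h3 : ThreeConnected G)
    (a1 b1 a2 b2 : V) (he1 : G.Adj a1 b1) (he2 : G.Adj a2 b2)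
    (hnee : s(a1, b1) ≠ s(a2, b2))
    (hnr1 : ¬ Removable G s(a1, b1)) (hnr2 : ¬ Removable G s(a2, b2))
    (hH : MatchingCovered (G.deleteEdges {s(a1, b1), s(a2, b2)}))
    (U W : Set V)
    (hbip : IsBipartition (G.deleteEdges {s(a1, b1), s(a2, b2)}) U W)
    (ha1 : a1 ∈ U) (hb1 : b1 ∈ U) (ha2 : a2 ∈ W) (hb2 : b2 ∈ W)
    (X : Set V)
    (hcut : {e : Sym2 V | ∃ u ∈ X, ∃ v ∈ Xᶜ, G.Adj u v ∧ e = s(u, v)}.ncard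
      = 3)
    (hX : 2 ≤ X.ncard) (hXc : 2 ≤ Xᶜ.ncard)
    (hUW : (X ∩ W).ncard ≤ (X ∩ U).ncard) :
    (X ∩ U).ncard = (X ∩ W).ncard + 1 := by
  classical
  obtain ⟨hdisj, huniv, hadjbip⟩ := hbip
  set aa := (Finset.univ.filter (fun v : V => v ∈ X ∧ v ∈ U)).card with haa
  set bb := (Finset.univ.filter (fun v : V => v ∈ X ∧ v ∈ W)).card with hbb
  have hAcard : (X ∩ U).ncard = aa := by
    rw [Set.ncard_eq_toFinset_card']
    congr 1
    ext v
    simp [Set.mem_toFinset]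
  have hBcard : (X ∩ W).ncard = bb := by
    rw [Set.ncard_eq_toFinset_card']
    congr 1
    ext v
    simp [Set.mem_toFinset]
  have hsum : ∀ (p : V → Prop) (_ : DecidablePred p),
      (Finset.univ.filter (fun d : G.Dart => p d.fst)).card
        = 3 * (Finset.univ.filter p).card := by
    intro p hp
    rw [myDartSum, Finset.sum_congr rfl (fun v _ => hcubic v), Finset.sum_const,
      smul_eq_mul, Nat.mul_comm]
  have hcut3 : (Finset.univ.filter
      (fun d : G.Dart => d.fst ∈ X ∧ d.snd ∈ Xᶜ)).card = 3 := by
    rw [← hcut, Set.ncard_eq_toFinset_card']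
    apply Finset.card_bij (fun d _ => d.edge)
    · intro d hd
      simp only [Finset.mem_filter, Finset.mem_univ, true_and] at hd
      rw [Set.mem_toFinset]
      exact ⟨d.fst, hd.1, d.snd, hd.2, d.adj, rfl⟩
    · intro d1 h1 d2 h2 h
      simp only [Finset.mem_filter, Finset.mem_univ, true_and] at h1 h2
      rw [SimpleGraph.dart_edge_eq_iff] at h
      rcases h with rfl | rfl
      · rfl
      · exact absurd h2.1 h1.2
    · intro e he
      rw [Set.mem_toFinset] at he
      obtain ⟨u, hu, v, hv, hadjuv, rfl⟩ := he
      exact ⟨⟨(u, v), hadjuv⟩, by simpa using ⟨hu, hv⟩, rfl⟩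
  have hvsplit : (Finset.univ.filter (fun v : V => v ∈ X)).card = aa + bb := by
    rw [haa, hbb, ← Finset.card_union_of_disjoint]
    · congr 1
      ext v
      simp only [Finset.mem_union, Finset.mem_filter, Finset.mem_univ, true_and]
      constructor
      · intro hv
        have hv2 : v ∈ U ∪ W := by rw [huniv]; exact Set.mem_univ v
        rcases hv2 with h | h
        · exact Or.inl ⟨hv, h⟩
        · exact Or.inr ⟨hv, h⟩
      · rintro (⟨h, _⟩ | ⟨h, _⟩) <;> exact h
    · rw [Finset.disjoint_left]
      intro v h1 h2
      simp only [Finset.mem_filter, Finset.mem_univ, true_and] at h1 h2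
      exact Set.disjoint_left.mp hdisj h1.2 h2.2
  have hdsplit : (Finset.univ.filter (fun d : G.Dart => d.fst ∈ X))
      = Finset.univ.filter (fun d : G.Dart => d.fst ∈ X ∧ d.snd ∈ X)
        ∪ Finset.univ.filter (fun d : G.Dart => d.fst ∈ X ∧ d.snd ∈ Xᶜ) := by
    ext d
    simp only [Finset.mem_union, Finset.mem_filter, Finset.mem_univ, true_and,
      Set.mem_compl_iff]
    by_cases h : d.snd ∈ X <;> tauto
  have hdin : Even (Finset.univ.filter
      (fun d : G.Dart => d.fst ∈ X ∧ d.snd ∈ X)).card := by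
    apply myEvenSymmClosed
    intro d hd
    simp only [Finset.mem_filter, Finset.mem_univ, true_and] at hd ⊢
    exact ⟨hd.2, hd.1⟩
  obtain ⟨k, hk⟩ := hdin
  have hsX : (Finset.univ.filter (fun d : G.Dart => d.fst ∈ X)).card
      = 3 * (Finset.univ.filter (fun v : V => v ∈ X)).card := hsum (fun v => v ∈ X) inferInstance
  have hodd : 3 * (aa + bb) = k + k + 3 := by
    rw [← hvsplit, ← hsX, hdsplit,
      Finset.card_union_of_disjoint, hk, hcut3]
    rw [Finset.disjoint_left]
    intro d h1 h2
    simp only [Finset.mem_filter, Finset.mem_univ, true_and, Set.mem_compl_iff] at h1 h2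
    exact h2.2 h1.2
  have hT1 : (Finset.univ.filter (fun d : G.Dart => d.snd ∈ X ∧ d.snd ∈ W)).card
      = 3 * bb := by
    have key := myDartSymm G (fun d : G.Dart => d.fst ∈ X ∧ d.fst ∈ W)
    have he : (Finset.univ.filter
        (fun d : G.Dart => d.symm.fst ∈ X ∧ d.symm.fst ∈ W))
        = Finset.univ.filter (fun d : G.Dart => d.snd ∈ X ∧ d.snd ∈ W) := by
      apply Finset.filter_congr
      intro d _
      simp
    rw [he] at key
    have hsW : (Finset.univ.filter
        (fun d : G.Dart => d.fst ∈ X ∧ d.fst ∈ W)).card = 3 * bb := hsum (fun v => v ∈ X ∧ v ∈ W) inferInstance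
    rw [key, hsW]
  have hcover : (Finset.univ.filter (fun d : G.Dart => d.fst ∈ X ∧ d.fst ∈ U))
      ⊆ (Finset.univ.filter (fun d : G.Dart => d.snd ∈ X ∧ d.snd ∈ W)
          ∪ Finset.univ.filter (fun d : G.Dart => d.fst ∈ X ∧ d.snd ∈ Xᶜ))
        ∪ ({⟨(a1, b1), he1⟩, (⟨(a1, b1), he1⟩ : G.Dart).symm} : Finset G.Dart) := by
    intro d hd
    simp only [Finset.mem_filter, Finset.mem_univ, true_and] at hd
    simp only [Finset.mem_union, Finset.mem_filter, Finset.mem_univ, true_and,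
      Finset.mem_insert, Finset.mem_singleton, Set.mem_compl_iff]
    by_cases h1 : d.edge = s(a1, b1)
    · right
      rw [SimpleGraph.dart_edge_eq_mk'_iff'] at h1
      rcases h1 with ⟨hf, hs⟩ | ⟨hf, hs⟩
      · left
        apply SimpleGraph.Dart.ext
        exact Prod.ext hf hs
      · right
        apply SimpleGraph.Dart.ext
        exact Prod.ext hf hs
    · by_cases h2 : d.edge = s(a2, b2)
      · exfalso
        rw [SimpleGraph.dart_edge_eq_mk'_iff'] at h2
        rcases h2 with ⟨hf, _⟩ | ⟨hf, _⟩ <;>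
          exact Set.disjoint_left.mp hdisj hd.2 (by rw [hf]; assumption)
      · have hH : (G.deleteEdges {s(a1, b1), s(a2, b2)}).Adj d.fst d.snd := by
          rw [SimpleGraph.deleteEdges_adj]
          refine ⟨d.adj, ?_⟩
          intro hc
          rcases hc with hc | hc
          · exact h1 hc
          · exact h2 hc
        rcases hadjbip _ _ hH with ⟨_, hsW⟩ | ⟨hfW, _⟩
        · by_cases hsX : d.snd ∈ X
          · exact Or.inl (Or.inl ⟨hsX, hsW⟩)
          · exact Or.inl (Or.inr ⟨hd.1, hsX⟩)
        · exact absurd hfW (Set.disjoint_left.mp hdisj hd.2)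
  have hbound : 3 * aa ≤ 3 * bb + 5 := by
    have h := Finset.card_le_card hcover
    have hsA : (Finset.univ.filter
        (fun d : G.Dart => d.fst ∈ X ∧ d.fst ∈ U)).card = 3 * aa := hsum (fun v => v ∈ X ∧ v ∈ U) inferInstance
    rw [hsA] at h
    have h3 : ({⟨(a1, b1), he1⟩, (⟨(a1, b1), he1⟩ : G.Dart).symm} : Finset G.Dart).card
        ≤ 2 := le_trans (Finset.card_insert_le _ _) (by simp)
    have h4 := Finset.card_union_le
      (Finset.univ.filter (fun d : G.Dart => d.snd ∈ X ∧ d.snd ∈ W))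
      (Finset.univ.filter (fun d : G.Dart => d.fst ∈ X ∧ d.snd ∈ Xᶜ))
    have h5 := Finset.card_union_le
      (Finset.univ.filter (fun d : G.Dart => d.snd ∈ X ∧ d.snd ∈ W)
        ∪ Finset.univ.filter (fun d : G.Dart => d.fst ∈ X ∧ d.snd ∈ Xᶜ))
      ({⟨(a1, b1), he1⟩, (⟨(a1, b1), he1⟩ : G.Dart).symm} : Finset G.Dart)
    rw [hT1, hcut3] at h4
    omega
  rw [hAcard, hBcard]
  rw [hAcard, hBcard] at hUW
  omega
end

section
/- In a brace on six or more vertices, every edge is removable. -/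
/-! Fix an edge `uw` with `u ∈ U`. Two-extendability lets us prescribe any two disjoint edges
`ab`, `cd` with `a, c ∈ U` in a perfect matching, and every vertex of `U` has degree at least
three. Taking `cd` at `u` but away from `w` and `b` shows that every edge `ab ≠ uw` lies in a
perfect matching avoiding `uw`, i.e. in a perfect matching of `H - uw`. It remains to see that
`H - uw` is connected. Otherwise the component `C` of `u` in `H - uw` misses `w`; then `C` is a
union of edges of a perfect matching of `H - uw`, so `|C|` is even, while a perfect matching of
`H` through `uw` pairs up `C \ {u}`, so `|C|` is odd. -/

open SimpleGraph Set

universe u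
variable {V : Type u}

namespace SimpleGraph

variable {G : SimpleGraph V}

lemma exists_adj_notMem_of_hasPM_induce_compl {S : Set V} (h : HasPM (G.induce Sᶜ)) {v : V}
    (hv : v ∉ S) : ∃ w, G.Adj v w ∧ w ∉ S := by
  obtain ⟨M, hM⟩ := h
  obtain ⟨w, hvw, -⟩ := hM.1 (hM.2 ⟨v, hv⟩)
  exact ⟨w, M.adj_sub hvw, w.2⟩

lemma Subgraph.IsMatching.exists_isPerfectMatching_le {M₁ : G.Subgraph} (h₁ : M₁.IsMatching)
    (h : HasPM (G.induce M₁.vertsᶜ)) : ∃ M : G.Subgraph, M.IsPerfectMatching ∧ M₁ ≤ M := by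
  obtain ⟨M₀, hM₀⟩ := h
  set M₂ := M₀.map (Embedding.induce M₁.vertsᶜ).toHom
  have h₂ : M₂.IsMatching := hM₀.1.map _ Subtype.val_injective
  have hverts : M₂.verts = M₁.vertsᶜ := by
    ext v
    simp [M₂, hM₀.2.verts_eq_univ]
  refine ⟨M₁ ⊔ M₂, ⟨h₁.sup h₂ ?_, ?_⟩, le_sup_left⟩
  · rw [h₁.support_eq_verts, h₂.support_eq_verts, hverts]
    exact disjoint_compl_right
  · intro v
    simp [hverts]

lemma Subgraph.IsPerfectMatching.even_ncard_of_adj_mem [Finite V] {M : G.Subgraph}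
    (hM : M.IsPerfectMatching) {s : Set V} (hs : ∀ x ∈ s, ∀ y, M.Adj x y → y ∈ s) :
    Even s.ncard := by
  have hmatch : (M.induce s).IsMatching := by
    intro v hv
    obtain ⟨w, hvw, hw⟩ := hM.1 (hM.2 v)
    exact ⟨w, ⟨hv, hs v hv w hvw, hvw⟩, fun y hy => hw y hy.2.2⟩
  have := Fintype.ofFinite s
  rw [Set.ncard_eq_toFinset_card']
  exact @hmatch.even_card _ _ _ this

lemma reachable_deleteEdges_of_isPerfectMatching [Finite V] {u w : V}
    {M : (G.deleteEdges {s(u, w)}).Subgraph} (hM : M.IsPerfectMatching)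
    {N : G.Subgraph} (hN : N.IsPerfectMatching) (huw : N.Adj u w) :
    (G.deleteEdges {s(u, w)}).Reachable u w := by
  by_contra hwC
  set C := {x | (G.deleteEdges {s(u, w)}).Reachable u x}
  have huC : u ∈ C := Reachable.refl u
  have hC : Even C.ncard :=
    hM.even_ncard_of_adj_mem fun x hx y hxy => hx.trans (M.adj_sub hxy).reachable
  -- Only `u` is matched by `N` outside `C`, namely to `w`.
  have hCu : Even (C \ {u}).ncard := by
    refine hN.even_ncard_of_adj_mem fun x ⟨hxC, hxu⟩ y hxy => ?_
    have hxw : x ≠ w := by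
      rintro rfl
      exact hwC hxC
    have hyu : y ≠ u := by
      rintro rfl
      exact hxw (hN.1.eq_of_adj_left hxy.symm huw)
    have hxy' : (G.deleteEdges {s(u, w)}).Adj x y := by
      refine deleteEdges_adj.2 ⟨N.adj_sub hxy, ?_⟩
      simp only [Set.mem_singleton_iff, Sym2.eq_iff]
      tauto
    exact ⟨hxC.trans hxy'.reachable, hyu⟩
  rw [← Set.ncard_sdiff_singleton_add_one huC, Nat.even_add_one] at hC
  exact hC hCu

lemma Subgraph.IsPerfectMatching.exists_deleteEdges {M : G.Subgraph} (hM : M.IsPerfectMatching)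
    {u w : V} (huw : ¬M.Adj u w) :
    ∃ M' : (G.deleteEdges {s(u, w)}).Subgraph, M'.IsPerfectMatching ∧ M'.Adj = M.Adj := by
  have hle : M.spanningCoe ≤ G.deleteEdges {s(u, w)} := by
    intro x y (hxy : M.Adj x y)
    refine SimpleGraph.deleteEdges_adj.2 ⟨M.adj_sub hxy, ?_⟩
    intro h
    rcases Sym2.eq_iff.1 h with ⟨rfl, rfl⟩ | ⟨rfl, rfl⟩
    exacts [huw hxy, huw hxy.symm]
  exact ⟨_, (Subgraph.IsPerfectMatching.toSubgraph_iff hle).2 hM, rfl⟩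

end SimpleGraph

def TwoExtendable (H : SimpleGraph V) (U W : Set V) : Prop :=
  ∀ u1 ∈ U, ∀ u2 ∈ U, ∀ w1 ∈ W, ∀ w2 ∈ W, u1 ≠ u2 → w1 ≠ w2 →
    HasPM (H.induce ({u1, u2, w1, w2} : Set V)ᶜ)

namespace IsBipartition

variable {H : SimpleGraph V} {U W : Set V}

lemma mem_right_of_adj (hbip : IsBipartition H U W) {a b : V} (ha : a ∈ U) (hab : H.Adj a b) :
    b ∈ W :=
  ((hbip.2.2 a b hab).resolve_right fun h => hbip.1.ne_of_mem ha h.1 rfl).2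

lemma exists_eq_mk_of_mem_edgeSet (hbip : IsBipartition H U W) {e : Sym2 V}
    (he : e ∈ H.edgeSet) : ∃ a b, a ∈ U ∧ H.Adj a b ∧ e = s(a, b) := by
  induction e using Sym2.ind with
  | _ x y =>
    rcases hbip.2.2 x y he with ⟨hx, -⟩ | ⟨-, hy⟩
    exacts [⟨x, y, hx, he, rfl⟩, ⟨y, x, hy, H.adj_symm he, Sym2.eq_swap⟩]

lemma ncard_add_ncard [Finite V] (hbip : IsBipartition H U W) :
    U.ncard + W.ncard = Nat.card V := by
  rw [← Set.ncard_union_eq hbip.1, hbip.2.1, Set.ncard_univ]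

end IsBipartition

namespace TwoExtendable

variable {H : SimpleGraph V} {U W : Set V}

lemma exists_adj_ne_ne [Finite V] (hext : TwoExtendable H U W) (hbip : IsBipartition H U W)
    (hU : 3 ≤ U.ncard) (hW : 2 ≤ W.ncard) {u : V} (hu : u ∈ U) (x y : V) :
    ∃ w, H.Adj u w ∧ w ≠ x ∧ w ≠ y := by
  have hxyW : ({x, y} ∩ W).ncard ≤ 2 :=
    ((Set.ncard_inter_le_ncard_left _ _).trans (Set.ncard_insert_le x {y})).trans_eq
      (by rw [Set.ncard_singleton])
  obtain ⟨S, hxyS, hSW, hS⟩ := Set.exists_subsuperset_card_eq Set.inter_subset_right hxyW hW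
  obtain ⟨w1, w2, hw12, rfl⟩ := Set.ncard_eq_two.1 hS
  have hUu : 1 < (U \ {u}).ncard := by
    rw [Set.ncard_sdiff_singleton_of_mem hu]
    omega
  obtain ⟨u1, u2, hu1, hu2, hu12⟩ := (Set.one_lt_ncard_iff).1 hUu
  have hw1 : w1 ∈ W := hSW (by simp)
  have hw2 : w2 ∈ W := hSW (by simp)
  have hu' : u ∉ ({u1, u2, w1, w2} : Set V) := by
    simp only [Set.mem_insert_iff, Set.mem_singleton_iff, not_or]
    exact ⟨fun h => hu1.2 h.symm, fun h => hu2.2 h.symm, hbip.1.ne_of_mem hu hw1,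
      hbip.1.ne_of_mem hu hw2⟩
  obtain ⟨p, hup, hp⟩ := exists_adj_notMem_of_hasPM_induce_compl
    (hext u1 hu1.1 u2 hu2.1 w1 hw1 w2 hw2 hu12 hw12) hu'
  have hpS : p ∉ ({w1, w2} : Set V) := fun h => hp (by simp_all)
  have hpW := hbip.mem_right_of_adj hu hup
  refine ⟨p, hup, ?_, ?_⟩ <;> rintro rfl <;> exact hpS (hxyS ⟨by simp, hpW⟩)

lemma exists_isPerfectMatching_adj_adj (hext : TwoExtendable H U W) (hbip : IsBipartition H U W)
    {a b c d : V} (ha : a ∈ U) (hc : c ∈ U) (hac : a ≠ c) (hbd : b ≠ d)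
    (hab : H.Adj a b) (hcd : H.Adj c d) :
    ∃ M : H.Subgraph, M.IsPerfectMatching ∧ M.Adj a b ∧ M.Adj c d := by
  have hb := hbip.mem_right_of_adj ha hab
  have hd := hbip.mem_right_of_adj hc hcd
  have had := hbip.1.ne_of_mem ha hd
  have hcb := hbip.1.ne_of_mem hc hb
  have hM₁ : (H.subgraphOfAdj hab ⊔ H.subgraphOfAdj hcd).IsMatching := by
    refine (Subgraph.IsMatching.subgraphOfAdj hab).sup (.subgraphOfAdj hcd) ?_
    rw [(Subgraph.IsMatching.subgraphOfAdj hab).support_eq_verts,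
      (Subgraph.IsMatching.subgraphOfAdj hcd).support_eq_verts]
    simp only [subgraphOfAdj_verts, disjoint_insert_right, mem_insert_iff, mem_singleton_iff,
      not_or, disjoint_singleton_right]
    exact ⟨⟨hac.symm, hcb⟩, had.symm, hbd.symm⟩
  have hverts : (H.subgraphOfAdj hab ⊔ H.subgraphOfAdj hcd).verts = {a, c, b, d} := by
    ext
    simp only [Subgraph.verts_sup, subgraphOfAdj_verts, Set.mem_union, Set.mem_insert_iff,
      Set.mem_singleton_iff]
    tauto
  obtain ⟨M, hM, hle⟩ := hM₁.exists_isPerfectMatching_le <| by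
    rw [hverts]
    exact hext a ha c hc b hb d hd hac hbd
  exact ⟨M, hM, hle.2 (.inl (subgraphOfAdj_adj_self hab)),
    hle.2 (.inr (subgraphOfAdj_adj_self hcd))⟩

lemma exists_isPerfectMatching_adj [Finite V] (hext : TwoExtendable H U W)
    (hbip : IsBipartition H U W) (hU : 3 ≤ U.ncard) (hW : 2 ≤ W.ncard) {a b : V} (ha : a ∈ U)
    (hab : H.Adj a b) : ∃ M : H.Subgraph, M.IsPerfectMatching ∧ M.Adj a b := by
  obtain ⟨c, hc, hca⟩ := Set.exists_ne_of_one_lt_ncard (by omega : 1 < U.ncard) a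
  obtain ⟨d, hcd, hdb, -⟩ := hext.exists_adj_ne_ne hbip hU hW hc b b
  obtain ⟨M, hM, hMab, -⟩ :=
    hext.exists_isPerfectMatching_adj_adj hbip ha hc hca.symm hdb.symm hab hcd
  exact ⟨M, hM, hMab⟩

lemma exists_isPerfectMatching_adj_not_adj [Finite V] (hext : TwoExtendable H U W)
    (hbip : IsBipartition H U W) (hU : 3 ≤ U.ncard) (hW : 2 ≤ W.ncard) {a b u w : V}
    (ha : a ∈ U) (hu : u ∈ U) (hab : H.Adj a b) (hne : s(a, b) ≠ s(u, w)) :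
    ∃ M : H.Subgraph, M.IsPerfectMatching ∧ M.Adj a b ∧ ¬M.Adj u w := by
  by_cases hau : a = u
  · subst hau
    obtain ⟨M, hM, hMab⟩ := hext.exists_isPerfectMatching_adj hbip hU hW ha hab
    exact ⟨M, hM, hMab, hM.1.not_adj_left_of_ne (fun h => hne (h ▸ rfl)) hMab⟩
  · obtain ⟨d, hud, hdw, hdb⟩ := hext.exists_adj_ne_ne hbip hU hW hu w b
    obtain ⟨M, hM, hMab, hMud⟩ :=
      hext.exists_isPerfectMatching_adj_adj hbip ha hu hau (Ne.symm hdb) hab hud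
    exact ⟨M, hM, hMab, hM.1.not_adj_left_of_ne hdw hMud⟩

lemma removable [Finite V] (hext : TwoExtendable H U W) (hbip : IsBipartition H U W)
    (hconn : H.Connected) (hU : 3 ≤ U.ncard) (hW : 2 ≤ W.ncard) {u w : V} (hu : u ∈ U)
    (huw : H.Adj u w) : Removable H s(u, w) := by
  have hcover : ∀ e ∈ (H.deleteEdges {s(u, w)}).edgeSet,
      ∃ M : (H.deleteEdges {s(u, w)}).Subgraph, M.IsPerfectMatching ∧ e ∈ M.edgeSet := by
    intro e he
    rw [edgeSet_deleteEdges] at he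
    obtain ⟨a, b, ha, hab, rfl⟩ := hbip.exists_eq_mk_of_mem_edgeSet he.1
    obtain ⟨M, hM, hMab, hMuw⟩ :=
      hext.exists_isPerfectMatching_adj_not_adj hbip hU hW ha hu hab he.2
    obtain ⟨M', hM', hadj⟩ := hM.exists_deleteEdges hMuw
    exact ⟨M', hM', by rwa [Subgraph.mem_edgeSet, hadj]⟩
  obtain ⟨w', huw', hw'w, -⟩ := hext.exists_adj_ne_ne hbip hU hW hu w w
  have he' : s(u, w') ∈ (H.deleteEdges {s(u, w)}).edgeSet := by simpa [hw'w, huw.ne] using huw'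
  obtain ⟨M', hM', -⟩ := hcover _ he'
  obtain ⟨N, hN, hNuw⟩ := hext.exists_isPerfectMatching_adj hbip hU hW hu huw
  exact ⟨huw, hconn.connected_delete_edge_of_not_isBridge
    (not_not.2 (reachable_deleteEdges_of_isPerfectMatching hM' hN hNuw)), ⟨_, he'⟩, hcover⟩

end TwoExtendable

theorem stmt19_general (H : SimpleGraph V) (U W : Set V)
    (hbip : IsBipartition H U W) (hcard : U.ncard = W.ncard)
    (hconn : H.Connected)
    (hext : ∀ u1 ∈ U, ∀ u2 ∈ U, ∀ w1 ∈ W, ∀ w2 ∈ W, u1 ≠ u2 → w1 ≠ w2 →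
      HasPM (H.induce ({u1, u2, w1, w2} : Set V)ᶜ))
    (hV : 6 ≤ Nat.card V) :
    ∀ e ∈ H.edgeSet, Removable H e := by
  have : Finite V := Nat.finite_of_card_ne_zero (by omega)
  have hU : 3 ≤ U.ncard := by
    have := hbip.ncard_add_ncard
    omega
  intro e he
  obtain ⟨u, w, hu, huw, rfl⟩ := hbip.exists_eq_mk_of_mem_edgeSet he
  exact TwoExtendable.removable hext hbip hconn hU (by omega) hu huw

/-- in a brace on six or more vertices every edge is removable. -/
theorem stmt19 [Fintype V] (H : SimpleGraph V) (U W : Set V)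
    (hbip : IsBipartition H U W) (hcard : U.ncard = W.ncard)
    (h2 : 2 ≤ U.ncard) (hconn : H.Connected)
    (hext : ∀ u1 ∈ U, ∀ u2 ∈ U, ∀ w1 ∈ W, ∀ w2 ∈ W, u1 ≠ u2 → w1 ≠ w2 →
      HasPM (H.induce ({u1, u2, w1, w2} : Set V)ᶜ))
    (hV : 6 ≤ Nat.card V) :
    ∀ e ∈ H.edgeSet, Removable H e :=
  stmt19_general H U W hbip hcard hconn hext hV
end
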